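/- Suppose there exists no line arrangement of 12 lines with 20 triple points (over any field), and suppose no arrangement of 13 lines has 26 triple points. Then no arrangement of 13 lines has 25 triple points. -/
import Mathlib


/-- `A` is a line arrangement in the projective plane over `K`: a finite set of
two-dimensional linear subspaces (lines) of `K³`. -/
def IsLineArrangement (K : Type) [Field K] (A : Finset (Submodule K (Fin 3 → K))) : Prop :=
  ∀ l ∈ A, Module.finrank K l = 2

/-- The number of triple points of the arrangement `A`: points (one-dimensional
subspaces of `K³`) lying on exactly three lines of `A`. -/
noncomputable def tripleCount (K : Type) [Field K]
    (A : Finset (Submodule K (Fin 3 → K))) : ℕ :=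
  Nat.card {p : Submodule K (Fin 3 → K) //
    Module.finrank K p = 1 ∧ Nat.card {l : Submodule K (Fin 3 → K) // l ∈ A ∧ p ≤ l} = 3}

open Module Finset

open scoped Classical in
/-- Number of lines of `A` through `p`. -/
noncomputable def multPt {K : Type} [Field K] (A : Finset (Submodule K (Fin 3 → K)))
    (p : Submodule K (Fin 3 → K)) : ℕ :=
  (A.filter (fun l => p ≤ l)).card

open scoped Classical in
/-- All pairwise intersection points of the arrangement. -/
noncomputable def ptsOf {K : Type} [Field K] (A : Finset (Submodule K (Fin 3 → K))) :
    Finset (Submodule K (Fin 3 → K)) :=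
  (A.offDiag).image (fun lm => lm.1 ⊓ lm.2)

section Helpers

variable {K : Type} [Field K]

open scoped Classical

lemma line_inf_rank_one {l m : Submodule K (Fin 3 → K)} (hl : finrank K l = 2)
    (hm : finrank K m = 2) (hne : l ≠ m) : finrank K ↥(l ⊓ m) = 1 := by
  have hsup : finrank K ↥(l ⊔ m) = 3 := by
    have hle : finrank K ↥(l ⊔ m) ≤ 3 := by
      have := Submodule.finrank_le (l ⊔ m); simpa using this
    have hlt : l < l ⊔ m := by
      rcases lt_or_eq_of_le (le_sup_left : l ≤ l ⊔ m) with h | h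
      · exact h
      · exfalso
        apply hne
        have hm' : m ≤ l := by rw [h]; exact le_sup_right
        exact (Submodule.eq_of_le_of_finrank_le hm' (by omega)).symm
    have := Submodule.finrank_lt_finrank_of_lt hlt
    omega
  have := Submodule.finrank_sup_add_finrank_inf_eq l m
  omega

lemma point_eq_inf {p l m : Submodule K (Fin 3 → K)} (hp : finrank K p = 1)
    (hl : finrank K l = 2) (hm : finrank K m = 2) (hne : l ≠ m)
    (h1 : p ≤ l) (h2 : p ≤ m) : p = l ⊓ m :=
  Submodule.eq_of_le_of_finrank_le (le_inf h1 h2)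
    (by rw [line_inf_rank_one hl hm hne, hp])

lemma natcard_lines_eq (A : Finset (Submodule K (Fin 3 → K))) (p : Submodule K (Fin 3 → K)) :
    Nat.card {l : Submodule K (Fin 3 → K) // l ∈ A ∧ p ≤ l} = multPt A p := by
  have e : {l : Submodule K (Fin 3 → K) // l ∈ A ∧ p ≤ l} ≃
      {l // l ∈ A.filter (fun l => p ≤ l)} :=
    Equiv.subtypeEquivRight (fun l => by simp)
  rw [Nat.card_congr e, Nat.card_eq_fintype_card, Fintype.card_coe]
  rfl

lemma mem_ptsOf {A : Finset (Submodule K (Fin 3 → K))} (hA : IsLineArrangement K A)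
    {p : Submodule K (Fin 3 → K)} (hp : finrank K p = 1) (h2 : 2 ≤ multPt A p) :
    p ∈ ptsOf A := by
  obtain ⟨l, hl, m, hm, hne⟩ := Finset.one_lt_card.mp (by unfold multPt at h2; omega : 1 < (A.filter (fun l => p ≤ l)).card)
  simp only [mem_filter] at hl hm
  rw [point_eq_inf hp (hA l hl.1) (hA m hm.1) hne hl.2 hm.2]
  exact Finset.mem_image.mpr ⟨(l, m), Finset.mem_offDiag.mpr ⟨hl.1, hm.1, hne⟩, rfl⟩

lemma ptsOf_spec {A : Finset (Submodule K (Fin 3 → K))} (hA : IsLineArrangement K A)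
    {p : Submodule K (Fin 3 → K)} (hp : p ∈ ptsOf A) :
    finrank K p = 1 ∧ 2 ≤ multPt A p := by
  obtain ⟨⟨l, m⟩, hlm, rfl⟩ := Finset.mem_image.mp hp
  rw [Finset.mem_offDiag] at hlm
  obtain ⟨hl, hm, hne⟩ := hlm
  refine ⟨line_inf_rank_one (hA l hl) (hA m hm) hne, ?_⟩
  have : ({l, m} : Finset (Submodule K (Fin 3 → K))) ⊆ A.filter (fun x => l ⊓ m ≤ x) := by
    intro x hx
    rcases Finset.mem_insert.mp hx with rfl | hx
    · exact Finset.mem_filter.mpr ⟨hl, inf_le_left⟩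
    · rw [Finset.mem_singleton.mp hx]; exact Finset.mem_filter.mpr ⟨hm, inf_le_right⟩
  have := Finset.card_le_card this
  rw [Finset.card_pair hne] at this
  unfold multPt
  exact this

end Helpers

section Main

variable {K : Type} [Field K]

open scoped Classical

noncomputable def TOf (A : Finset (Submodule K (Fin 3 → K))) : Finset (Submodule K (Fin 3 → K)) :=
  (ptsOf A).filter (fun p => multPt A p = 3)

lemma mem_TOf_iff {A : Finset (Submodule K (Fin 3 → K))} (hA : IsLineArrangement K A)
    {p : Submodule K (Fin 3 → K)} :
    p ∈ TOf A ↔ finrank K p = 1 ∧ multPt A p = 3 := by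
  constructor
  · intro h
    rw [TOf, mem_filter] at h
    exact ⟨(ptsOf_spec hA h.1).1, h.2⟩
  · rintro ⟨h1, h2⟩
    exact mem_filter.mpr ⟨mem_ptsOf hA h1 (by omega), h2⟩

lemma tripleCount_eq {A : Finset (Submodule K (Fin 3 → K))} (hA : IsLineArrangement K A) :
    tripleCount K A = (TOf A).card := by
  rw [tripleCount]
  have e : {p : Submodule K (Fin 3 → K) //
      finrank K p = 1 ∧ Nat.card {l : Submodule K (Fin 3 → K) // l ∈ A ∧ p ≤ l} = 3}
      ≃ {p // p ∈ TOf A} :=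
    Equiv.subtypeEquivRight (fun p => by rw [natcard_lines_eq, mem_TOf_iff hA])
  rw [Nat.card_congr e, Nat.card_eq_fintype_card, Fintype.card_coe]

lemma fiber_eq {A : Finset (Submodule K (Fin 3 → K))} (hA : IsLineArrangement K A)
    {p : Submodule K (Fin 3 → K)} (hp : p ∈ ptsOf A) :
    A.offDiag.filter (fun lm => lm.1 ⊓ lm.2 = p) = (A.filter (fun l => p ≤ l)).offDiag := by
  have hp1 := (ptsOf_spec hA hp).1
  ext ⟨l, m⟩
  simp only [Finset.mem_filter, Finset.mem_offDiag]
  constructor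
  · rintro ⟨⟨hl, hm, hne⟩, heq⟩
    exact ⟨⟨hl, heq ▸ inf_le_left⟩, ⟨hm, heq ▸ inf_le_right⟩, hne⟩
  · rintro ⟨⟨hl, hpl⟩, ⟨hm, hpm⟩, hne⟩
    exact ⟨⟨hl, hm, hne⟩, (point_eq_inf hp1 (hA l hl) (hA m hm) hne hpl hpm).symm⟩

lemma sum_mult {A : Finset (Submodule K (Fin 3 → K))} (hA : IsLineArrangement K A) :
    ∑ p ∈ ptsOf A, multPt A p * (multPt A p - 1) = A.card * A.card - A.card := by
  have H : ∀ lm ∈ A.offDiag, lm.1 ⊓ lm.2 ∈ ptsOf A := fun lm h => mem_image.mpr ⟨lm, h, rfl⟩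
  calc ∑ p ∈ ptsOf A, multPt A p * (multPt A p - 1)
      = ∑ p ∈ ptsOf A, (A.offDiag.filter (fun lm => lm.1 ⊓ lm.2 = p)).card := by
        refine Finset.sum_congr rfl (fun p hp => ?_)
        rw [fiber_eq hA hp, Finset.offDiag_card]
        unfold multPt
        rw [Nat.mul_sub, mul_one]
    _ = A.offDiag.card := (Finset.card_eq_sum_card_fiberwise H).symm
    _ = A.card * A.card - A.card := by rw [Finset.offDiag_card]

lemma sum_line {A : Finset (Submodule K (Fin 3 → K))} (hA : IsLineArrangement K A)
    {l : Submodule K (Fin 3 → K)} (hl : l ∈ A) :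
    ∑ p ∈ (ptsOf A).filter (fun p => p ≤ l), (multPt A p - 1) = A.card - 1 := by
  have H : ∀ m ∈ A.erase l, l ⊓ m ∈ (ptsOf A).filter (fun p => p ≤ l) := by
    intro m hm
    rw [Finset.mem_erase] at hm
    refine Finset.mem_filter.mpr ⟨mem_image.mpr ⟨(l, m), Finset.mem_offDiag.mpr
      ⟨hl, hm.2, (Ne.symm hm.1)⟩, rfl⟩, inf_le_left⟩
  have fib : ∀ p ∈ (ptsOf A).filter (fun p => p ≤ l),
      (A.erase l).filter (fun m => l ⊓ m = p) = (A.filter (fun m => p ≤ m)).erase l := by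
    intro p hp
    rw [Finset.mem_filter] at hp
    have hp1 := (ptsOf_spec hA hp.1).1
    ext m
    simp only [Finset.mem_filter, Finset.mem_erase]
    constructor
    · rintro ⟨⟨hne, hmA⟩, heq⟩
      exact ⟨hne, hmA, heq ▸ inf_le_right⟩
    · rintro ⟨hne, hmA, hpm⟩
      exact ⟨⟨hne, hmA⟩, (point_eq_inf hp1 (hA l hl) (hA m hmA) (Ne.symm hne) hp.2 hpm).symm⟩
  calc ∑ p ∈ (ptsOf A).filter (fun p => p ≤ l), (multPt A p - 1)
      = ∑ p ∈ (ptsOf A).filter (fun p => p ≤ l), ((A.erase l).filter (fun m => l ⊓ m = p)).card := by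
        refine Finset.sum_congr rfl (fun p hp => ?_)
        rw [fib p hp]
        rw [Finset.card_erase_of_mem (Finset.mem_filter.mpr ⟨hl, (Finset.mem_filter.mp hp).2⟩)]
        rfl
    _ = (A.erase l).card := (Finset.card_eq_sum_card_fiberwise H).symm
    _ = A.card - 1 := Finset.card_erase_of_mem hl

end Main

section Final

variable {K : Type} [Field K]

open scoped Classical

lemma erase_arrangement {A : Finset (Submodule K (Fin 3 → K))} (hA : IsLineArrangement K A)
    (l : Submodule K (Fin 3 → K)) : IsLineArrangement K (A.erase l) :=
  fun m hm => hA m (Finset.mem_of_mem_erase hm)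

lemma multPt_erase {A : Finset (Submodule K (Fin 3 → K))} {l p : Submodule K (Fin 3 → K)}
    (hl : l ∈ A) :
    multPt (A.erase l) p = if p ≤ l then multPt A p - 1 else multPt A p := by
  unfold multPt
  rw [Finset.filter_erase]
  by_cases h : p ≤ l
  · rw [if_pos h, Finset.card_erase_of_mem (Finset.mem_filter.mpr ⟨hl, h⟩)]
  · rw [if_neg h, Finset.erase_eq_of_notMem (fun hc => h (Finset.mem_filter.mp hc).2)]

lemma TOf_erase {A : Finset (Submodule K (Fin 3 → K))} (hA : IsLineArrangement K A)
    {l : Submodule K (Fin 3 → K)} (hl : l ∈ A)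
    (hQ : ∀ p ∈ ptsOf A, multPt A p ≤ 3) :
    TOf (A.erase l) = (TOf A).filter (fun p => ¬ p ≤ l) := by
  ext p
  rw [mem_TOf_iff (erase_arrangement hA l), Finset.mem_filter, mem_TOf_iff hA,
    multPt_erase hl]
  by_cases h : p ≤ l
  · rw [if_pos h]
    constructor
    · rintro ⟨h1, h3⟩
      exfalso
      have hge : 1 ≤ multPt A p := by
        unfold multPt
        exact Finset.card_pos.mpr ⟨l, Finset.mem_filter.mpr ⟨hl, h⟩⟩
      have h4 : multPt A p = 4 := by omega
      have := hQ p (mem_ptsOf hA h1 (by omega))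
      omega
    · rintro ⟨_, hc⟩
      exact absurd h hc
  · rw [if_neg h]
    tauto

end Final

/-- If over no field there exists an arrangement of 12 lines with 20 triple points,
and over no field there exists an arrangement of 13 lines with 26 triple points,
then over no field there exists an arrangement of 13 lines with 25 triple points. -/
theorem no_13_lines_25_triple_points
    (h12 : ∀ (K : Type) [Field K] (A : Finset (Submodule K (Fin 3 → K))),
      IsLineArrangement K A → A.card = 12 → tripleCount K A ≠ 20)
    (h13 : ∀ (K : Type) [Field K] (A : Finset (Submodule K (Fin 3 → K))),
      IsLineArrangement K A → A.card = 13 → tripleCount K A ≠ 26) :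
    ∀ (K : Type) [Field K] (A : Finset (Submodule K (Fin 3 → K))),
      IsLineArrangement K A → A.card = 13 → tripleCount K A ≠ 25 := by
  intro K _ A hA hcard htc
  classical
  have hT : (TOf A).card = 25 := by rw [← tripleCount_eq hA, htc]
  have hsum : ∑ p ∈ ptsOf A, multPt A p * (multPt A p - 1) = 156 := by
    rw [sum_mult hA, hcard]
  have hTsum : ∑ p ∈ TOf A, multPt A p * (multPt A p - 1) = 150 := by
    have h6 : ∀ p ∈ TOf A, multPt A p * (multPt A p - 1) = 6 := by
      intro p hp
      rw [((mem_TOf_iff hA).mp hp).2]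
    rw [Finset.sum_congr rfl h6, Finset.sum_const, hT, smul_eq_mul]
  set D : Finset (Submodule K (Fin 3 → K)) :=
    (ptsOf A).filter (fun p => ¬ multPt A p = 3) with hDdef
  have hsplit := Finset.sum_filter_add_sum_filter_not (ptsOf A) (fun p => multPt A p = 3)
      (fun p => multPt A p * (multPt A p - 1))
  have hTf : (ptsOf A).filter (fun p => multPt A p = 3) = TOf A := rfl
  rw [hTf, hTsum, ← hDdef, hsum] at hsplit
  have hDsum : ∑ p ∈ D, multPt A p * (multPt A p - 1) = 6 := by omega
  have hD2 : ∀ p ∈ D, multPt A p = 2 := by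
    intro p hp
    have hpp := Finset.mem_filter.mp hp
    have h2 := (ptsOf_spec hA hpp.1).2
    by_contra hne
    have h4 : 4 ≤ multPt A p := by omega
    have hle : multPt A p * (multPt A p - 1) ≤ ∑ x ∈ D, multPt A x * (multPt A x - 1) :=
      Finset.single_le_sum
        (f := fun p => multPt A p * (multPt A p - 1)) (fun i _ => Nat.zero_le _) hp
    have h12' : 12 ≤ multPt A p * (multPt A p - 1) := by
      calc (12 : ℕ) = 4 * 3 := by norm_num
        _ ≤ multPt A p * (multPt A p - 1) := Nat.mul_le_mul h4 (by omega)
    omega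
  have hDcard : D.card = 3 := by
    have h2 : ∑ p ∈ D, multPt A p * (multPt A p - 1) = ∑ _p ∈ D, 2 :=
      Finset.sum_congr rfl (fun p hp => by rw [hD2 p hp])
    rw [h2, Finset.sum_const, smul_eq_mul] at hDsum
    omega
  have hQ : ∀ p ∈ ptsOf A, multPt A p ≤ 3 := by
    intro p hp
    by_cases h : multPt A p = 3
    · omega
    · have := hD2 p (Finset.mem_filter.mpr ⟨hp, h⟩); omega
  have hd0 : ∀ l ∈ A, (D.filter (fun p => p ≤ l)).card = 0 := by
    intro l hl
    have hline := sum_line hA hl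
    rw [hcard] at hline
    have hsplit2 := Finset.sum_filter_add_sum_filter_not ((ptsOf A).filter (fun p => p ≤ l))
      (fun p => multPt A p = 3) (fun p => multPt A p - 1)
    have e1 : ((ptsOf A).filter (fun p => p ≤ l)).filter (fun p => multPt A p = 3)
        = (TOf A).filter (fun p => p ≤ l) := by
      rw [Finset.filter_comm, hTf]
    have e2 : ((ptsOf A).filter (fun p => p ≤ l)).filter (fun p => ¬ multPt A p = 3)
        = D.filter (fun p => p ≤ l) := by
      rw [Finset.filter_comm, ← hDdef]
    rw [e1, e2, hline] at hsplit2
    have hts : ∑ p ∈ (TOf A).filter (fun p => p ≤ l), (multPt A p - 1)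
        = 2 * ((TOf A).filter (fun p => p ≤ l)).card := by
      have h2 : ∀ p ∈ (TOf A).filter (fun p => p ≤ l), multPt A p - 1 = 2 := by
        intro p hp
        rw [((mem_TOf_iff hA).mp (Finset.mem_filter.mp hp).1).2]
      rw [Finset.sum_congr rfl h2, Finset.sum_const, smul_eq_mul, mul_comm]
    have hds : ∑ p ∈ D.filter (fun p => p ≤ l), (multPt A p - 1)
        = (D.filter (fun p => p ≤ l)).card := by
      have h1 : ∀ p ∈ D.filter (fun p => p ≤ l), multPt A p - 1 = 1 := by
        intro p hp
        rw [hD2 p (Finset.mem_filter.mp hp).1]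
      rw [Finset.sum_congr rfl h1, Finset.sum_const, smul_eq_mul, mul_one]
    rw [hts, hds] at hsplit2
    have hdle : (D.filter (fun p => p ≤ l)).card ≤ 3 :=
      le_trans (Finset.card_le_card (Finset.filter_subset _ _)) (le_of_eq hDcard)
    have ht25 : ((TOf A).filter (fun p => p ≤ l)).card
        + ((TOf A).filter (fun p => ¬ p ≤ l)).card = 25 := by
      rw [Finset.card_filter_add_card_filter_not, hT]
    have h20 := h12 K (A.erase l) (erase_arrangement hA l)
      (by rw [Finset.card_erase_of_mem hl, hcard])
    rw [tripleCount_eq (erase_arrangement hA l), TOf_erase hA hl hQ] at h20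
    omega
  obtain ⟨p, hp⟩ : D.Nonempty := Finset.card_pos.mp (by omega)
  have h2 : 2 ≤ multPt A p := (ptsOf_spec hA (Finset.mem_filter.mp hp).1).2
  have hpos : 0 < (A.filter (fun l => p ≤ l)).card := by
    unfold multPt at h2; omega
  obtain ⟨l, hl⟩ := Finset.card_pos.mp hpos
  rw [Finset.mem_filter] at hl
  have hmem : p ∈ D.filter (fun q => q ≤ l) := Finset.mem_filter.mpr ⟨hp, hl.2⟩
  have := hd0 l hl.1
  exact absurd this (Finset.card_ne_zero_of_mem hmem)
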